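/- Suppose U: ℝ³ → [0,∞) satisfies lim_{|x|→∞} ‖(|x⊥|^α,|x₃|^γ)‖_{2/β}·U(x) = g > 0 with α > 2, β > 0, γ > 0. Then for every ε ∈ (0,1) there exists T such that for all t ≥ T and all y with |y| ≥ (1-ε): t·U(t^{1/α}y⊥, t^{1/γ}y₃) ≤ (1+ε)·u(y), where u(y) = g·(|y⊥|^{2α/β} + |y₃|^{2γ/β})^{-β/2}. -/

import Mathlib

/-!
The weight `‖(|x⊥|^α, |x₃|^γ)‖_{2/β}` in the hypothesis is homogeneous of degree one under
the anisotropic scaling `x ↦ (t^{1/α} x⊥, t^{1/γ} x₃)`, and `u` is exactly `g` divided by it.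
So `t U(scaleMap t y) ≤ (1+ε) u(y)` says that the weighted potential at `scaleMap t y` is below
`(1+ε) g`, which holds as soon as `scaleMap t y` is far out. Since `t ≥ 1` scales every coordinate
by at least `t^{min(1/α, 1/γ)}`, this is the case uniformly for `|y| ≥ 1 - ε` once `t` is large.
-/

open MeasureTheory Real Filter

/-- The `2/β`-pseudo-norm of `(c₁, c₂) ∈ ℝ²`. -/
noncomputable def pnorm (β c₁ c₂ : ℝ) : ℝ := (|c₁| ^ (2 / β) + |c₂| ^ (2 / β)) ^ (β / 2)

/-- The anisotropic scaling `x ↦ (t^{1/α} x⊥, t^{1/γ} x₃)` on `ℝ³`. -/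
noncomputable def scaleMap (α γ t : ℝ) (x : EuclideanSpace ℝ (Fin 3)) :
    EuclideanSpace ℝ (Fin 3) :=
  WithLp.toLp 2 ![t ^ (1 / α) * x 0, t ^ (1 / α) * x 1, t ^ (1 / γ) * x 2]

/-- The anisotropic model potential `u(x) = g (|x⊥|^{2α/β} + |x₃|^{2γ/β})^{-β/2}`. -/
noncomputable def uFun (g α β γ : ℝ) (x : EuclideanSpace ℝ (Fin 3)) : ℝ :=
  g * (Real.sqrt ((x 0) ^ 2 + (x 1) ^ 2) ^ (2 * α / β) + |x 2| ^ (2 * γ / β)) ^ (-(β / 2))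

lemma pnorm_mul_mul {β : ℝ} (hβ : β ≠ 0) {t : ℝ} (ht : 0 ≤ t) (a b : ℝ) :
    pnorm β (t * a) (t * b) = t * pnorm β a b := by
  unfold pnorm
  rw [abs_mul, abs_mul, abs_of_nonneg ht, mul_rpow ht (abs_nonneg a),
    mul_rpow ht (abs_nonneg b), ← mul_add, mul_rpow (by positivity) (by positivity),
    ← rpow_mul ht, show 2 / β * (β / 2) = 1 by field_simp, rpow_one]

lemma pnorm_pos (β : ℝ) {a b : ℝ} (hab : a ≠ 0 ∨ b ≠ 0) : 0 < pnorm β a b := by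
  unfold pnorm
  refine rpow_pos_of_pos ?_ _
  rcases hab with ha | hb
  · exact add_pos_of_pos_of_nonneg (rpow_pos_of_pos (abs_pos.2 ha) _) (by positivity)
  · exact add_pos_of_nonneg_of_pos (by positivity) (rpow_pos_of_pos (abs_pos.2 hb) _)

lemma EuclideanSpace.norm_le_norm_of_abs_le {ι : Type*} [Fintype ι]
    {x y : EuclideanSpace ℝ ι} (h : ∀ i, |x i| ≤ |y i|) : ‖x‖ ≤ ‖y‖ := by
  rw [EuclideanSpace.norm_eq, EuclideanSpace.norm_eq]
  gcongr with i
  exact h i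

noncomputable def perpNorm (x : EuclideanSpace ℝ (Fin 3)) : ℝ := √(x 0 ^ 2 + x 1 ^ 2)

noncomputable def anisoNorm (α β γ : ℝ) (x : EuclideanSpace ℝ (Fin 3)) : ℝ :=
  pnorm β (perpNorm x ^ α) (|x 2| ^ γ)

lemma anisoNorm_pos (α β γ : ℝ) {y : EuclideanSpace ℝ (Fin 3)} (hy : y ≠ 0) :
    0 < anisoNorm α β γ y := by
  obtain ⟨i, hi⟩ : ∃ i, y i ≠ 0 := by
    by_contra! h
    exact hy (PiLp.ext h)
  refine pnorm_pos β ?_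
  have hperp (h : 0 < y 0 ^ 2 + y 1 ^ 2) : perpNorm y ^ α ≠ 0 :=
    (rpow_pos_of_pos (sqrt_pos.2 h) α).ne'
  fin_cases i
  · exact Or.inl (hperp (by positivity))
  · exact Or.inl (hperp (by positivity))
  · exact Or.inr (rpow_pos_of_pos (abs_pos.2 hi) γ).ne'

lemma uFun_eq_div_anisoNorm (g α β γ : ℝ) (y : EuclideanSpace ℝ (Fin 3)) :
    uFun g α β γ y = g / anisoNorm α β γ y := by
  have hr : 0 ≤ perpNorm y := sqrt_nonneg _
  have hperp : |perpNorm y ^ α| ^ (2 / β) = perpNorm y ^ (2 * α / β) := by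
    rw [abs_of_nonneg (by positivity), ← rpow_mul hr]
    ring_nf
  have hvert : |(|y 2| ^ γ)| ^ (2 / β) = |y 2| ^ (2 * γ / β) := by
    rw [abs_of_nonneg (by positivity), ← rpow_mul (abs_nonneg _)]
    ring_nf
  rw [anisoNorm, pnorm, hperp, hvert, uFun, rpow_neg (by positivity), div_eq_mul_inv]
  rfl

section scaleMap

variable {α γ t : ℝ}

lemma perpNorm_scaleMap (ht : 0 ≤ t) (y : EuclideanSpace ℝ (Fin 3)) :
    perpNorm (scaleMap α γ t y) = t ^ (1 / α) * perpNorm y := by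
  change √((t ^ (1 / α) * y 0) ^ 2 + (t ^ (1 / α) * y 1) ^ 2) = _
  rw [mul_pow, mul_pow, ← mul_add, sqrt_mul (sq_nonneg _), sqrt_sq (by positivity), perpNorm]

lemma abs_scaleMap_two (ht : 0 ≤ t) (y : EuclideanSpace ℝ (Fin 3)) :
    |scaleMap α γ t y 2| = t ^ (1 / γ) * |y 2| := by
  change |t ^ (1 / γ) * y 2| = _
  rw [abs_mul, abs_of_nonneg (by positivity)]

lemma anisoNorm_scaleMap {β : ℝ} (hα : α ≠ 0) (hβ : β ≠ 0) (hγ : γ ≠ 0) (ht : 0 ≤ t)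
    (y : EuclideanSpace ℝ (Fin 3)) :
    anisoNorm α β γ (scaleMap α γ t y) = t * anisoNorm α β γ y := by
  have hr : 0 ≤ perpNorm y := sqrt_nonneg _
  rw [anisoNorm, perpNorm_scaleMap ht, abs_scaleMap_two ht, mul_rpow (by positivity) hr,
    mul_rpow (by positivity) (abs_nonneg _), one_div, one_div, rpow_inv_rpow ht hα,
    rpow_inv_rpow ht hγ, pnorm_mul_mul hβ ht, anisoNorm]

lemma rpow_min_mul_norm_le_norm_scaleMap (ht : 1 ≤ t) (y : EuclideanSpace ℝ (Fin 3)) :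
    t ^ min (1 / α) (1 / γ) * ‖y‖ ≤ ‖scaleMap α γ t y‖ := by
  have ht0 : 0 ≤ t := zero_le_one.trans ht
  have hm : 0 ≤ t ^ min (1 / α) (1 / γ) := rpow_nonneg ht0 _
  have htα : t ^ min (1 / α) (1 / γ) ≤ t ^ (1 / α) :=
    rpow_le_rpow_of_exponent_le ht (min_le_left _ _)
  have htγ : t ^ min (1 / α) (1 / γ) ≤ t ^ (1 / γ) :=
    rpow_le_rpow_of_exponent_le ht (min_le_right _ _)
  rw [← abs_of_nonneg hm, ← Real.norm_eq_abs, ← norm_smul]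
  refine EuclideanSpace.norm_le_norm_of_abs_le fun i => ?_
  change |t ^ min (1 / α) (1 / γ) * y i| ≤ |(![_, _, _] : Fin 3 → ℝ) i|
  rw [abs_mul, abs_of_nonneg hm]
  fin_cases i <;>
  · simp only [Fin.zero_eta, Fin.mk_one, Fin.reduceFinMk, Matrix.cons_val, abs_mul,
      abs_of_nonneg (rpow_nonneg ht0 _)]
    gcongr

lemma eventually_le_norm_scaleMap (hα : 0 < α) (hγ : 0 < γ) {c : ℝ} (hc : 0 < c) (R : ℝ) :
    ∀ᶠ t in atTop, ∀ y, c ≤ ‖y‖ → R ≤ ‖scaleMap α γ t y‖ := by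
  have hm : 0 < min (1 / α) (1 / γ) := by positivity
  filter_upwards [eventually_ge_atTop 1, (tendsto_rpow_atTop hm).eventually_ge_atTop (R / c)]
    with t ht htR y hy
  calc R = R / c * c := by field_simp
    _ ≤ t ^ min (1 / α) (1 / γ) * ‖y‖ := mul_le_mul htR hy hc.le (rpow_nonneg (by linarith) _)
    _ ≤ ‖scaleMap α γ t y‖ := rpow_min_mul_norm_le_norm_scaleMap ht y

lemma eventually_forall_scaleMap_of_cobounded (hα : 0 < α) (hγ : 0 < γ) {c : ℝ} (hc : 0 < c)
    {p : EuclideanSpace ℝ (Fin 3) → Prop} (hp : ∀ᶠ x in Bornology.cobounded _, p x) :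
    ∀ᶠ t in atTop, ∀ y, c ≤ ‖y‖ → p (scaleMap α γ t y) := by
  obtain ⟨R, -, hR⟩ := hasBasis_cobounded_norm.eventually_iff.1 hp
  filter_upwards [eventually_le_norm_scaleMap hα hγ hc R] with t ht y hy
  exact hR (ht y hy)

end scaleMap

theorem scaled_potential_uniform_bound_general (U : EuclideanSpace ℝ (Fin 3) → ℝ)
    (g α β γ : ℝ) (hg : 0 < g) (hα : 2 < α) (hβ : 0 < β) (hγ : 0 < γ)
    (hlim : Tendsto
      (fun x : EuclideanSpace ℝ (Fin 3) =>
        pnorm β (Real.sqrt ((x 0) ^ 2 + (x 1) ^ 2) ^ α) (|x 2| ^ γ) * U x)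
      (cocompact (EuclideanSpace ℝ (Fin 3))) (nhds g)) :
    ∀ ε : ℝ, 0 < ε → ε < 1 → ∃ T : ℝ, ∀ t : ℝ, T ≤ t →
      ∀ y : EuclideanSpace ℝ (Fin 3), 1 - ε ≤ ‖y‖ →
        t * U (scaleMap α γ t y) ≤ (1 + ε) * uFun g α β γ y := by
  intro ε hε hε1
  have hα0 : 0 < α := by linarith
  have hfar : ∀ᶠ x in Bornology.cobounded _, anisoNorm α β γ x * U x < (1 + ε) * g := by
    rw [Metric.cobounded_eq_cocompact]
    exact hlim.eventually_lt_const (by nlinarith)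
  obtain ⟨T, hT⟩ := eventually_atTop.1 ((eventually_ge_atTop 0).and
    (eventually_forall_scaleMap_of_cobounded hα0 hγ (sub_pos.2 hε1) hfar))
  refine ⟨T, fun t ht y hy => ?_⟩
  obtain ⟨ht0, hscaled⟩ := hT t ht
  have hbound := hscaled y hy
  rw [anisoNorm_scaleMap hα0.ne' hβ.ne' hγ.ne' ht0] at hbound
  have hy0 : y ≠ 0 := norm_pos_iff.1 (by linarith)
  rw [uFun_eq_div_anisoNorm, mul_div_assoc', le_div_iff₀ (anisoNorm_pos α β γ hy0)]
  linarith

/-- Uniform upper bound `t U(t^{1/α}y⊥, t^{1/γ}y₃) ≤ (1+ε) u(y)` for large `t` and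
`|y| ≥ 1 - ε`. -/
theorem scaled_potential_uniform_bound (U : EuclideanSpace ℝ (Fin 3) → ℝ)
    (hU0 : ∀ x, 0 ≤ U x) (g α β γ : ℝ) (hg : 0 < g) (hα : 2 < α) (hβ : 0 < β) (hγ : 0 < γ)
    (hlim : Tendsto
      (fun x : EuclideanSpace ℝ (Fin 3) =>
        pnorm β (Real.sqrt ((x 0) ^ 2 + (x 1) ^ 2) ^ α) (|x 2| ^ γ) * U x)
      (cocompact (EuclideanSpace ℝ (Fin 3))) (nhds g)) :
    ∀ ε : ℝ, 0 < ε → ε < 1 → ∃ T : ℝ, ∀ t : ℝ, T ≤ t →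
      ∀ y : EuclideanSpace ℝ (Fin 3), 1 - ε ≤ ‖y‖ →
        t * U (scaleMap α γ t y) ≤ (1 + ε) * uFun g α β γ y :=
  scaled_potential_uniform_bound_general U g α β γ hg hα hβ hγ hlim
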